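/- If (f, g) is a crossed pair in Homeo₊(I), then the subgroup generated by f and g contains a free semigroup on two generators. -/

import Mathlib

/-!
Let `f` fix `a` and `b` but no point of `(a, b)`, and say `g a ∈ (a, b)`; the case `g b ∈ (a, b)`
is the same statement for the reversed order. A strictly increasing bijection without fixed points
in `(a, b)` moves all of `(a, b)` in one direction, because the supremum of a bounded monotone orbit
is a fixed point. Replacing `f` by `f⁻¹` if necessary, `f` pushes every point of `(a, b)` towards
`a`, and for the same reason every orbit `fⁿ x` in `(a, b)` comes arbitrarily close to `a`.
Take `p ∈ (a, b)` with `g p ∈ (a, b)`. For large `m`, `fᵐ g` maps `[a, p]` into a subinterval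
`[fᵐ g a, fᵐ g p]` away from `a`, and for larger `k`, `fᵏ` maps `[a, p]` into `[a, fᵏ p]` below it.
By ping-pong, `fᵐ g` and `fᵏ` generate a free semigroup.
-/

noncomputable section

/-- The unit interval `[0,1] ⊆ ℝ`. -/
abbrev unitI : Set ℝ := Set.Icc (0:ℝ) 1

/-- Ambient group: bijections of the unit interval. -/
abbrev IntervalMap : Type := Equiv.Perm ↥unitI

/-- The extension of `σ` to `ℝ`, by the identity outside `[0,1]`. -/
def toReal (σ : IntervalMap) : ℝ → ℝ :=
  fun x => if h : x ∈ unitI then (σ ⟨x, h⟩ : ℝ) else x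

/-- `σ` is an orientation-preserving homeomorphism of `[0,1]` (a strictly
increasing bijection of `[0,1]`; such a map automatically fixes `0` and `1`
and is continuous). -/
def IsOPH (σ : IntervalMap) : Prop := StrictMono fun x : ↥unitI => (σ x : ℝ)

/-- `σ` extends to a `C¹` function on `[0,1]`. -/
def IsC1On (σ : IntervalMap) : Prop := ContDiffOn ℝ 1 (toReal σ) unitI

/-- `σ` is an orientation-preserving `C¹` diffeomorphism of `[0,1]`. -/
def IsOPD (σ : IntervalMap) : Prop := IsOPH σ ∧ IsC1On σ ∧ IsC1On σ⁻¹

/-- `Γ` is a subgroup of `Diff₊(I)`. -/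
def DiffSubgroup (Γ : Subgroup IntervalMap) : Prop := ∀ γ ∈ Γ, IsOPD γ

/-- `Γ` is a subgroup of `Homeo₊(I)`. -/
def HomeoSubgroup (Γ : Subgroup IntervalMap) : Prop := ∀ γ ∈ Γ, IsOPH γ

/-- The set of fixed points of `σ` in the open interval `(0,1)`. -/
def FixPts (σ : IntervalMap) : Set ↥unitI :=
  {x : ↥unitI | σ x = x ∧ 0 < (x : ℝ) ∧ (x : ℝ) < 1}

/-- Every non-identity element of `Γ` has finitely many fixed points in `(0,1)`. -/
def FinFix (Γ : Subgroup IntervalMap) : Prop := ∀ γ ∈ Γ, γ ≠ 1 → (FixPts γ).Finite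

/-- The `C⁰`-norm `‖σ‖ = sup_{x ∈ [0,1]} |σ(x) - x|`. -/
def C0norm (σ : IntervalMap) : ℝ := ⨆ x : ↥unitI, |(σ x : ℝ) - (x : ℝ)|

/-- `Γ` is locally transitive. -/
def LocTrans (Γ : Subgroup IntervalMap) : Prop :=
  ∀ p : ↥unitI, 0 < (p : ℝ) → (p : ℝ) < 1 → ∀ ε : ℝ, 0 < ε →
    ∃ γ ∈ Γ, C0norm γ < ε ∧ γ p ≠ p

/-- `Γ` is irreducible: no global fixed point in `(0,1)`. -/
def Irred (Γ : Subgroup IntervalMap) : Prop :=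
  ¬ ∃ p : ↥unitI, 0 < (p : ℝ) ∧ (p : ℝ) < 1 ∧ ∀ γ ∈ Γ, γ p = p

/-- The group `Aff₊(ℝ)` of orientation-preserving affine maps `x ↦ a x + b`,
`a > 0`, as a subgroup of the permutation group of `ℝ`. -/
def AffPlus : Subgroup (Equiv.Perm ℝ) where
  carrier := {e | ∃ a b : ℝ, 0 < a ∧ ∀ x, e x = a * x + b}
  one_mem' := ⟨1, 0, one_pos, fun x => by simp⟩
  mul_mem' := by
    rintro e f ⟨a, b, ha, he⟩ ⟨c, d, hc, hf⟩
    refine ⟨a * c, a * d + b, mul_pos ha hc, fun x => ?_⟩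
    rw [Equiv.Perm.mul_apply, hf, he]; ring
  inv_mem' := by
    rintro e ⟨a, b, ha, he⟩
    refine ⟨a⁻¹, -b / a, by positivity, fun y => ?_⟩
    apply e.injective
    rw [show e (e⁻¹ y) = y from e.apply_symm_apply y, he]
    field_simp
    try ring

/-- `G` embeds into (i.e. is isomorphic to a subgroup of) `Aff₊(ℝ)`. -/
def EmbedsInAff (G : Type*) [Group G] : Prop :=
  ∃ φ : G →* ↥AffPlus, Function.Injective φ

/-- `G` embeds into `Aff₊(ℝ)ⁿ` for some `n ≥ 1`. -/
def EmbedsInAffPow (G : Type*) [Group G] : Prop :=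
  ∃ n : ℕ, 1 ≤ n ∧ ∃ φ : G →* (Fin n → ↥AffPlus), Function.Injective φ

/-- `G` has infinite girth: for every `m` there is a finite generating set `S`
such that no non-trivial reduced word of length at most `m` in `S ∪ S⁻¹`
represents the identity. -/
def HasInfiniteGirth (G : Type*) [Group G] : Prop :=
  ∀ m : ℕ, ∃ S : Finset G, Subgroup.closure (S : Set G) = ⊤ ∧
    ∀ w : FreeGroup {x // x ∈ S}, w ≠ 1 →
      (∃ l : List ({x // x ∈ S} × Bool), l.length ≤ m ∧ FreeGroup.mk l = w) →
      FreeGroup.lift (fun s => (s : G)) w ≠ 1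

/-- `a` and `b` generate a free semigroup on two generators: distinct
non-empty positive words in `a, b` give distinct elements. -/
def FreeSemigroupPair {G : Type*} [Group G] (a b : G) : Prop :=
  Function.Injective
    ⇑(FreeSemigroup.lift (fun x : Bool => if x then a else b) : FreeSemigroup Bool →ₙ* G)

/-- `g < f` in the biorder: `g(x) < f(x)` near `0`. -/
def ltNear (g f : IntervalMap) : Prop :=
  ∃ δ : ℝ, 0 < δ ∧ ∀ x : ↥unitI, 0 < (x : ℝ) → (x : ℝ) < δ → (g x : ℝ) < (f x : ℝ)

/-- `g ≤ f` in the biorder. -/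
def leNear (g f : IntervalMap) : Prop := ltNear g f ∨ g = f

/-- `g << f`: `g` is infinitesimal with respect to `f`, i.e. `gⁿ < f` for all `n ∈ ℤ`. -/
def Infinitesimal (g f : IntervalMap) : Prop := ∀ n : ℤ, ltNear (g ^ n) f

/-- `(f, g)` is a crossed pair on the interval `(a,b)`: `f` fixes `a` and `b`
but no point strictly between them, while `g` maps `a` or `b` into `(a,b)`. -/
def CrossedOn (f g : IntervalMap) (a b : ↥unitI) : Prop :=
  f a = a ∧ f b = b ∧ (∀ x : ↥unitI, (a : ℝ) < x → (x : ℝ) < b → f x ≠ x) ∧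
  (((a : ℝ) < (g a : ℝ) ∧ (g a : ℝ) < b) ∨ ((a : ℝ) < (g b : ℝ) ∧ (g b : ℝ) < b))

/-- `(f, g)` is a crossed pair. -/
def CrossedPair (f g : IntervalMap) : Prop :=
  ∃ a b : ↥unitI, (a : ℝ) < b ∧ (CrossedOn f g a b ∨ CrossedOn g f a b)

/-- The auxiliary point configuration used in weak transitivity:
`extPt γ p 0 = 0`, `extPt γ p j = γ(pⱼ)` for `1 ≤ j ≤ k` (here `pⱼ = p ⟨j-1⟩`
in `0`-indexed notation), and `extPt γ p (k+1) = 1`. -/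
def extPt (γ : IntervalMap) {k : ℕ} (p : Fin k → ↥unitI) (j : ℕ) : ℝ :=
  if j = 0 then 0 else if h : j - 1 < k then (γ (p ⟨j - 1, h⟩) : ℝ) else 1

/-- `Γ` is weakly `k`-transitive. -/
def WeaklyKTrans (Γ : Subgroup IntervalMap) (k : ℕ) : Prop :=
  ∀ g ∈ Γ, ∀ p : Fin k → ↥unitI,
    (∀ i, 0 < (p i : ℝ) ∧ (p i : ℝ) < 1) →
    (StrictMono fun i => (p i : ℝ)) →
    ∀ ε : ℝ, 0 < ε →
      ∃ γ ∈ Γ, extPt γ p k < ε ∧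
        ∀ i : Fin k,
          extPt γ p i.val < (g (γ (p i)) : ℝ) ∧
            (g (γ (p i)) : ℝ) < extPt γ p (i.val + 2)

/-- `Γ` is weakly transitive. -/
def WeakTrans (Γ : Subgroup IntervalMap) : Prop := ∀ k : ℕ, 1 ≤ k → WeaklyKTrans Γ k

open Set Function Equiv

section PingPong

variable {ι G T : Type*} [Group G] [MulAction G T] (φ : ι → G) {X : Set T} {Y : ι → Set T}

namespace FreeMonoid

theorem mapsTo_lift_smul (hmaps : ∀ i, MapsTo (φ i • ·) X (Y i)) (hsub : ∀ i, Y i ⊆ X)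
    (w : FreeMonoid ι) : MapsTo (lift φ w • ·) X X := by
  induction w using FreeMonoid.inductionOn' with
  | one => exact fun x hx => by simpa using hx
  | of_mul i w ih =>
    intro x hx
    simp only [map_mul, lift_eval_of, mul_smul]
    exact hsub i (hmaps i (ih hx))

theorem mapsTo_lift_of_mul_smul (hmaps : ∀ i, MapsTo (φ i • ·) X (Y i)) (hsub : ∀ i, Y i ⊆ X)
    (i : ι) (w : FreeMonoid ι) : MapsTo (lift φ (of i * w) • ·) X (Y i) := by
  intro x hx
  simp only [map_mul, lift_eval_of, mul_smul]
  exact hmaps i (mapsTo_lift_smul φ hmaps hsub w hx)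

theorem lift_injective_of_pingpong [Nontrivial ι] (hX : X.Nonempty)
    (hmaps : ∀ i, MapsTo (φ i • ·) X (Y i)) (hsub : ∀ i, Y i ⊆ X)
    (hdisj : Pairwise (Disjoint on Y)) : Injective (lift φ) := by
  have hhead : ∀ i j w w', lift φ (of i * w) = lift φ (of j * w') → i = j := by
    intro i j w w' h
    by_contra hij
    obtain ⟨x, hx⟩ := hX
    have hj := mapsTo_lift_of_mul_smul φ hmaps hsub j w' hx
    rw [← h] at hj
    exact disjoint_left.mp (hdisj hij) (mapsTo_lift_of_mul_smul φ hmaps hsub i w hx) hj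
  -- a word `i w` equal to `1` would map `Y j ⊆ X` into the disjoint set `Y i`
  have hne_one : ∀ i w, lift φ (of i * w) ≠ 1 := by
    intro i w h
    obtain ⟨j, hji⟩ := exists_ne i
    obtain ⟨x, hx⟩ := hX
    have hi := mapsTo_lift_of_mul_smul φ hmaps hsub i w (hsub j (hmaps j hx))
    simp only [h, one_smul] at hi
    exact disjoint_left.mp (hdisj hji) (hmaps j hx) hi
  intro w₁
  induction w₁ using FreeMonoid.recOn with
  | one =>
    intro w₂ h
    cases w₂ using FreeMonoid.casesOn with
    | one => rfl
    | of_mul j w => exact absurd (h.symm.trans (map_one _)) (hne_one j w)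
  | of_mul i w ih =>
    intro w₂ h
    cases w₂ using FreeMonoid.casesOn with
    | one => exact absurd (h.trans (map_one _)) (hne_one i w)
    | of_mul j w' =>
      obtain rfl := hhead i j w w' h
      rw [map_mul, map_mul] at h
      rw [ih (mul_left_cancel h)]

end FreeMonoid

theorem FreeSemigroup.lift_injective_of_pingpong [Nontrivial ι] (hX : X.Nonempty)
    (hmaps : ∀ i, MapsTo (φ i • ·) X (Y i)) (hsub : ∀ i, Y i ⊆ X)
    (hdisj : Pairwise (Disjoint on Y)) : Injective (lift φ) := by
  have hlift : lift φ = (FreeMonoid.lift φ).toMulHom.comp toFreeMonoid := hom_ext rfl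
  rw [hlift]
  exact (FreeMonoid.lift_injective_of_pingpong φ hX hmaps hsub hdisj).comp toFreeMonoid_injective

theorem freeSemigroupPair_of_mapsTo {a b : G} {A B : Set T} (hX : X.Nonempty)
    (ha : MapsTo (a • ·) X A) (hb : MapsTo (b • ·) X B) (hA : A ⊆ X) (hB : B ⊆ X)
    (hAB : Disjoint A B) : FreeSemigroupPair a b :=
  FreeSemigroup.lift_injective_of_pingpong _ (Y := fun c => bif c then A else B) hX
    (Bool.forall_bool.2 ⟨hb, ha⟩) (Bool.forall_bool.2 ⟨hB, hA⟩)
    (pairwise_disjoint_on_bool.2 hAB)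

end PingPong

theorem StrictMono.perm_inv {T : Type*} [LinearOrder T] {f : Perm T} (hf : StrictMono f) :
    StrictMono ⇑f⁻¹ :=
  fun x y h => hf.lt_iff_lt.1 (by simpa using h)

section OrbitDynamics

variable {T : Type*} [ConditionallyCompleteLinearOrder T] {f : Perm T}

theorem exists_isFixedPt_mem_Icc_of_iterate_le (hf : StrictMono f) {x c : T} (hx : x ≤ f x)
    (hc : ∀ n, f^[n] x ≤ c) : ∃ z ∈ Icc x c, IsFixedPt f z := by
  have hbdd : BddAbove (range fun n => f^[n] x) := ⟨c, forall_mem_range.2 hc⟩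
  have hle : ∀ n, f^[n] x ≤ ⨆ n, f^[n] x := le_ciSup hbdd
  set S := ⨆ n, f^[n] x
  refine ⟨S, ⟨hle 0, ciSup_le hc⟩, le_antisymm ?_ ?_⟩
  · have hS : S ≤ f⁻¹ S := ciSup_le fun n => by
      rw [← hf.le_iff_le, Perm.coe_inv, apply_symm_apply, ← iterate_succ_apply' f n x]
      exact hle (n + 1)
    simpa using hf.monotone hS
  · refine ciSup_le fun n => ?_
    calc f^[n] x ≤ f^[n + 1] x := hf.monotone.monotone_iterate_of_le_map hx n.le_succ
      _ = f (f^[n] x) := iterate_succ_apply' f n x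
      _ ≤ f S := hf.monotone (hle n)

theorem exists_isFixedPt_mem_Icc_of_le_apply (hf : StrictMono f) {x y : T} (hxy : x ≤ y)
    (hx : x ≤ f x) (hy : f y ≤ y) : ∃ z ∈ Icc x y, IsFixedPt f z := by
  refine exists_isFixedPt_mem_Icc_of_iterate_le hf hx fun n => ?_
  induction n with
  | zero => exact hxy
  | succ n ih => exact (iterate_succ_apply' f n x).trans_le ((hf.monotone ih).trans hy)

theorem forall_lt_apply_or_forall_apply_lt (hf : StrictMono f) {a b : T}
    (hfix : ∀ x ∈ Ioo a b, f x ≠ x) :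
    (∀ x ∈ Ioo a b, x < f x) ∨ (∀ x ∈ Ioo a b, f x < x) := by
  by_contra! ⟨⟨x, hx, hfx⟩, ⟨y, hy, hfy⟩⟩
  rcases le_total y x with hyx | hxy
  · obtain ⟨z, hz, hfz⟩ := exists_isFixedPt_mem_Icc_of_le_apply hf hyx hfy hfx
    exact hfix z ⟨hy.1.trans_le hz.1, hz.2.trans_lt hx.2⟩ hfz
  · have hx' : x ≤ f⁻¹ x := by rwa [← hf.le_iff_le, Perm.coe_inv, apply_symm_apply]
    have hy' : f⁻¹ y ≤ y := by rwa [← hf.le_iff_le, Perm.coe_inv, apply_symm_apply]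
    obtain ⟨z, hz, hfz⟩ := exists_isFixedPt_mem_Icc_of_le_apply hf.perm_inv hxy hx' hy'
    exact hfix z ⟨hx.1.trans_le hz.1, hz.2.trans_lt hy.2⟩ (Perm.inv_eq_iff_eq.1 hfz).symm

theorem exists_iterate_lt (hf : StrictMono f) {a b : T} (hcontr : ∀ x ∈ Ioo a b, f x < x)
    {x t : T} (hxb : x < b) (hat : a < t) : ∃ n, f^[n] x < t := by
  -- otherwise the infimum of the orbit is a fixed point in `(a, b)`
  by_contra! h
  have hax : a < x := hat.trans_le (h 0)
  obtain ⟨z, ⟨hzx, htz⟩, hfz⟩ := exists_isFixedPt_mem_Icc_of_iterate_le (T := Tᵒᵈ) (f := f)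
    hf.dual (x := OrderDual.toDual x) (c := OrderDual.toDual t) (hcontr x ⟨hax, hxb⟩).le h
  have hz : z ∈ Ioo a b :=
    ⟨hat.trans_le (OrderDual.le_toDual.1 htz), (OrderDual.toDual_le.1 hzx).trans_lt hxb⟩
  exact (hcontr z hz).ne hfz

end OrbitDynamics

section PingPongOnInterval

variable {T : Type*} [ConditionallyCompleteLinearOrder T] [DenselyOrdered T]

theorem exists_freeSemigroupPair_of_contracting {h g : Perm T} {a b : T} (hh : StrictMono h)
    (hg : StrictMono g) (hha : h a = a) (hcontr : ∀ x ∈ Ioo a b, h x < x) (hga : g a ∈ Ioo a b) :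
    ∃ m k : ℕ, FreeSemigroupPair (h ^ m * g) (h ^ k) := by
  obtain ⟨c, hgac, hcb⟩ := exists_between hga.2
  set p := min (g⁻¹ c) (g a)
  have hap : a < p := lt_min (by rwa [← hg.lt_iff_lt, Perm.coe_inv, apply_symm_apply]) hga.1
  have hpb : p < b := (min_le_right _ _).trans_lt hga.2
  have hgpb : g p < b := by
    refine (hg.monotone (min_le_left _ _)).trans_lt ?_
    rwa [Perm.coe_inv, apply_symm_apply]
  have hfix : ∀ n, h^[n] a = a := fun n => iterate_fixed hha n
  obtain ⟨m, hm⟩ := exists_iterate_lt hh hcontr hgpb hap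
  have ham : a < h^[m] (g a) := by simpa [hfix] using hh.iterate m hga.1
  obtain ⟨k, hk⟩ := exists_iterate_lt hh hcontr hpb ham
  have hmono : h^[m] (g a) ≤ h^[m] (g p) := (hh.iterate m).monotone (hg.monotone hap.le)
  refine ⟨m, k, freeSemigroupPair_of_mapsTo (X := Icc a p) (A := Icc (h^[m] (g a)) (h^[m] (g p)))
    (B := Icc a (h^[k] p)) (nonempty_Icc.2 hap.le) ?_ ?_ ?_ ?_ ?_⟩
  · intro x hx
    simpa only [Perm.smul_def, Perm.coe_mul, Perm.coe_pow, comp_apply] using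
      ((hh.iterate m).monotone.comp hg.monotone).mapsTo_Icc hx
  · intro x hx
    simpa only [Perm.smul_def, Perm.coe_pow, hfix] using (hh.iterate k).monotone.mapsTo_Icc hx
  · exact Icc_subset_Icc ham.le hm.le
  · exact Icc_subset_Icc le_rfl (hk.le.trans (hmono.trans hm.le))
  · exact disjoint_left.2 fun x hA hB => (hB.2.trans_lt hk).not_ge hA.1

end PingPongOnInterval

section Crossing

variable {T : Type*} [ConditionallyCompleteLinearOrder T] [DenselyOrdered T] {f g : Perm T}
  {a b : T}

theorem exists_freeSemigroupPair_of_apply_left_mem_Ioo (hf : StrictMono f) (hg : StrictMono g)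
    (hfa : f a = a) (hfix : ∀ x ∈ Ioo a b, f x ≠ x) (hga : g a ∈ Ioo a b) :
    ∃ α ∈ Subgroup.closure {f, g}, ∃ β ∈ Subgroup.closure {f, g}, FreeSemigroupPair α β := by
  have hfmem : f ∈ Subgroup.closure {f, g} := Subgroup.subset_closure (mem_insert f _)
  have hgmem : g ∈ Subgroup.closure {f, g} := Subgroup.subset_closure (mem_insert_of_mem f rfl)
  have of_contracting : ∀ h ∈ Subgroup.closure {f, g}, StrictMono h → h a = a →
      (∀ x ∈ Ioo a b, h x < x) →
      ∃ α ∈ Subgroup.closure {f, g}, ∃ β ∈ Subgroup.closure {f, g}, FreeSemigroupPair α β := by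
    intro h hmem hh hha hcontr
    obtain ⟨m, k, hpair⟩ := exists_freeSemigroupPair_of_contracting hh hg hha hcontr hga
    exact ⟨_, mul_mem (pow_mem hmem m) hgmem, _, pow_mem hmem k, hpair⟩
  rcases forall_lt_apply_or_forall_apply_lt hf hfix with hup | hdown
  · refine of_contracting f⁻¹ (inv_mem hfmem) hf.perm_inv (Perm.inv_eq_iff_eq.2 hfa.symm)
      fun x hx => ?_
    rw [← hf.lt_iff_lt, Perm.coe_inv, apply_symm_apply]
    exact hup x hx
  · exact of_contracting f hfmem hf hfa hdown

theorem exists_freeSemigroupPair_of_crossing (hf : StrictMono f) (hg : StrictMono g)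
    (hfa : f a = a) (hfb : f b = b) (hfix : ∀ x ∈ Ioo a b, f x ≠ x)
    (hcross : g a ∈ Ioo a b ∨ g b ∈ Ioo a b) :
    ∃ α ∈ Subgroup.closure {f, g}, ∃ β ∈ Subgroup.closure {f, g}, FreeSemigroupPair α β := by
  rcases hcross with hga | hgb
  · exact exists_freeSemigroupPair_of_apply_left_mem_Ioo hf hg hfa hfix hga
  · exact exists_freeSemigroupPair_of_apply_left_mem_Ioo (T := Tᵒᵈ) (f := f) (g := g)
      (a := OrderDual.toDual b) (b := OrderDual.toDual a) hf.dual hg.dual hfb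
      (fun x hx => hfix x ⟨hx.2, hx.1⟩) ⟨hgb.2, hgb.1⟩

end Crossing

theorem CrossedOn.exists_freeSemigroupPair {f g : IntervalMap} {a b : unitI} (hf : IsOPH f)
    (hg : IsOPH g) (h : CrossedOn f g a b) :
    ∃ α ∈ Subgroup.closure {f, g}, ∃ β ∈ Subgroup.closure {f, g}, FreeSemigroupPair α β :=
  let ⟨hfa, hfb, hfix, hcross⟩ := h
  exists_freeSemigroupPair_of_crossing hf hg hfa hfb (fun x hx => hfix x hx.1 hx.2) hcross

theorem stmt14 (f g : IntervalMap) (hf : IsOPH f) (hg : IsOPH g)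
    (hcross : CrossedPair f g) :
    ∃ a ∈ Subgroup.closure {f, g}, ∃ b ∈ Subgroup.closure {f, g},
      FreeSemigroupPair a b := by
  obtain ⟨a, b, -, hfg | hgf⟩ := hcross
  · exact hfg.exists_freeSemigroupPair hf hg
  · rw [pair_comm]
    exact hgf.exists_freeSemigroupPair hg hf

end
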